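/- For every odd natural number n, the model space associated with the n-matching π given by π(2j) = 2j+1 for all j ∈ {0,...,(n-1)/2} is homeomorphic to the n-sphere Sⁿ. -/

import Mathlib

open Finsupp

noncomputable section

/-- The old Mathlib `SimplexCategory.toTopObj` (removed upstream), restored with its old meaning. -/
def SimplexCategory.toTopObj (x : SimplexCategory) : Set (Fin (x.len + 1) → NNReal) :=
  { f | ∑ i, f i = 1 }

/-- The old Mathlib `SimplexCategory.toTopMap` (removed upstream), restored with its old meaning. -/
def SimplexCategory.toTopMap {x y : SimplexCategory} (f : x ⟶ y) (g : x.toTopObj) :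
    y.toTopObj :=
  ⟨fun i => ∑ j ∈ Finset.univ.filter (fun j => f.toOrderHom j = i), g.1 j, by
    show ∑ i, ∑ j ∈ Finset.univ.filter (fun j => f.toOrderHom j = i), g.1 j = 1
    rw [Finset.sum_fiberwise]
    exact g.2⟩

theorem SimplexCategory.continuous_toTopMap {x y : SimplexCategory} (f : x ⟶ y) :
    Continuous (SimplexCategory.toTopMap f) :=
  Continuous.subtype_mk (continuous_pi fun _ => continuous_finset_sum _ fun j _ =>
    (continuous_apply j).comp continuous_subtype_val) _

/-- The topological standard `n`-simplex. -/
abbrev TopSimplex (n : ℕ) : Type :=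
  (SimplexCategory.mk n).toTopObj

/-- Singular `n`-simplices on `X`. -/
abbrev SingularSimplex (n : ℕ) (X : Type*) [TopologicalSpace X] : Type _ :=
  C(TopSimplex n, X)

/-- Singular `n`-chains on `X` with coefficients in `R`. -/
abbrev SC (R : Type*) [Ring R] (n : ℕ) (X : Type*) [TopologicalSpace X] : Type _ :=
  SingularSimplex n X →₀ R

/-- The inclusion of the `j`-th face of the standard `(n+1)`-simplex. -/
def faceIncl (n : ℕ) (j : Fin (n + 2)) : C(TopSimplex n, TopSimplex (n + 1)) :=
  ⟨SimplexCategory.toTopMap (SimplexCategory.δ j), SimplexCategory.continuous_toTopMap _⟩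

/-- The `j`-th face of a singular `(n+1)`-simplex. -/
def sface {n : ℕ} {X : Type*} [TopologicalSpace X] (j : Fin (n + 2))
    (σ : SingularSimplex (n + 1) X) : SingularSimplex n X :=
  σ.comp (faceIncl n j)

/-- The singular boundary operator. -/
def bdry (R : Type*) [Ring R] {n : ℕ} (X : Type*) [TopologicalSpace X] :
    SC R (n + 1) X →+ SC R n X :=
  Finsupp.liftAddHom fun σ =>
    ∑ j : Fin (n + 2), (Finsupp.singleAddHom (sface j σ)).comp
      (AddMonoidHom.mulLeft ((-1 : R) ^ (j : ℕ)))

/-- The subgroup of singular cycles. -/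
def cycles (R : Type*) [Ring R] : (n : ℕ) → (X : Type*) → [TopologicalSpace X] →
    AddSubgroup (SC R n X)
  | 0, _, _ => ⊤
  | (_ + 1), X, _ => (bdry R X).ker

/-- The subgroup of singular boundaries. -/
def bdries (R : Type*) [Ring R] (n : ℕ) (X : Type*) [TopologicalSpace X] :
    AddSubgroup (SC R n X) :=
  (bdry R (n := n) X).range

/-- Singular homology of `X` in degree `n` with coefficients in `R`. -/
abbrev SH (R : Type*) [Ring R] (n : ℕ) (X : Type*) [TopologicalSpace X] : Type _ :=
  cycles R n X ⧸ ((bdries R n X).addSubgroupOf (cycles R n X))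

/-- The homology class of a cycle. -/
def hcls {R : Type*} [Ring R] {n : ℕ} {X : Type*} [TopologicalSpace X]
    (c : SC R n X) (hc : c ∈ cycles R n X) : SH R n X :=
  QuotientAddGroup.mk ⟨c, hc⟩

lemma mem_cycles_of {R : Type*} [Ring R] {n : ℕ} {X : Type*} [TopologicalSpace X]
    {c : SC R (n + 1) X} (hc : bdry R X c = 0) : c ∈ cycles R (n + 1) X :=
  hc

/-- The chain map induced by a continuous map. -/
def cmap (R : Type*) [Ring R] {n : ℕ} {X Y : Type*} [TopologicalSpace X] [TopologicalSpace Y]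
    (f : C(X, Y)) : SC R n X →+ SC R n Y :=
  Finsupp.liftAddHom fun σ => Finsupp.singleAddHom (f.comp σ)

lemma sface_comp {n : ℕ} {X Y : Type*} [TopologicalSpace X] [TopologicalSpace Y]
    (f : C(X, Y)) (j : Fin (n + 2)) (σ : SingularSimplex (n + 1) X) :
    sface j (f.comp σ) = f.comp (sface j σ) := rfl

lemma cmap_bdry (R : Type*) [Ring R] {n : ℕ} {X Y : Type*} [TopologicalSpace X]
    [TopologicalSpace Y] (f : C(X, Y)) (c : SC R (n + 1) X) :
    bdry R Y (cmap R f c) = cmap R f (bdry R X c) := by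
  have : (bdry R Y).comp (cmap R (n := n + 1) f) = (cmap R f).comp (bdry R X) := by
    refine Finsupp.addHom_ext fun σ a => ?_
    simp only [AddMonoidHom.comp_apply, bdry, cmap, Finsupp.liftAddHom_apply_single,
      AddMonoidHom.finset_sum_apply, AddMonoidHom.coe_comp, Function.comp_apply,
      AddMonoidHom.coe_mulLeft, Finsupp.singleAddHom_apply, map_sum, sface_comp]
  exact DFunLike.congr_fun this c

lemma cmap_mem_cycles {R : Type*} [Ring R] {n : ℕ} {X Y : Type*} [TopologicalSpace X]
    [TopologicalSpace Y] (f : C(X, Y)) {c : SC R n X} (hc : c ∈ cycles R n X) :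
    cmap R f c ∈ cycles R n Y := by
  cases n with
  | zero => trivial
  | succ n =>
      have hc' : bdry R X c = 0 := hc
      show bdry R Y (cmap R f c) = 0
      rw [cmap_bdry, hc', map_zero]

/-- The map induced on homology by a continuous map. -/
def hmap (R : Type*) [Ring R] {n : ℕ} {X Y : Type*} [TopologicalSpace X] [TopologicalSpace Y]
    (f : C(X, Y)) : SH R n X →+ SH R n Y :=
  QuotientAddGroup.map _ _
    (AddMonoidHom.codRestrict ((cmap R f).comp (cycles R n X).subtype) (cycles R n Y)
      fun c => cmap_mem_cycles f c.2)
    (by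
      rintro ⟨c, hc⟩ hmem
      have hb : c ∈ bdries R n X := hmem
      obtain ⟨b, hb⟩ := hb
      show _ ∈ (bdries R n Y).addSubgroupOf _
      refine ⟨cmap R f b, ?_⟩
      simp only [AddMonoidHom.codRestrict_apply, AddMonoidHom.comp_apply,
        AddSubgroup.coe_subtype]
      rw [cmap_bdry, hb])

/-- The `ℓ¹`-norm of an integral chain. -/
def norm1 {n : ℕ} {X : Type*} [TopologicalSpace X] (c : SC ℤ n X) : ℕ :=
  c.sum fun _ a => a.natAbs

/-- The integral `ℓ¹`-seminorm of an integral homology class. -/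
def clnorm {n : ℕ} {X : Type*} [TopologicalSpace X] (α : SH ℤ n X) : ℕ :=
  sInf { m | ∃ c : cycles ℤ n X, (QuotientAddGroup.mk c : SH ℤ n X) = α ∧ norm1 c.1 = m }

/-- A fundamental class: a generator of the infinite cyclic top homology of an oriented
closed connected manifold. -/
structure FundClass (n : ℕ) (M : Type*) [TopologicalSpace M] where
  cls : SH ℤ n M
  spans : ∀ x : SH ℤ n M, ∃ k : ℤ, x = k • cls
  torsionfree : ∀ k : ℤ, k • cls = 0 → k = 0

/-- The integral simplicial volume. -/
def isv (n : ℕ) (M : Type*) [TopologicalSpace M] (φ : FundClass n M) : ℕ :=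
  clnorm φ.cls

/-- A matching on the faces of the standard `(n+1)`-simplex: a bijection from the
even-indexed faces onto the odd-indexed faces. -/
def IsMatching (n : ℕ) (π : Fin (n + 2) → Fin (n + 2)) : Prop :=
  Set.BijOn π { j | Even (j : ℕ) } { j | Odd (j : ℕ) }

/-- The gluing relation of the model space of a matching. -/
def matchRel (n : ℕ) (π : Fin (n + 2) → Fin (n + 2)) (x y : TopSimplex (n + 1)) : Prop :=
  ∃ j : Fin (n + 2), Even (j : ℕ) ∧ ∃ t : TopSimplex n,
    x = faceIncl n j t ∧ y = faceIncl n (π j) t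

/-- The model space `M_π` of a matching `π`. -/
abbrev ModelSpace (n : ℕ) (π : Fin (n + 2) → Fin (n + 2)) : Type :=
  Quot (matchRel n π)

/-- The canonical projection `σ_π : Δ^{n+1} → M_π`, a singular simplex on `M_π`. -/
def modelProj (n : ℕ) (π : Fin (n + 2) → Fin (n + 2)) :
    SingularSimplex (n + 1) (ModelSpace n π) :=
  ⟨Quot.mk _, continuous_quot_mk⟩

/-- The unreduced suspension of a space. -/
abbrev Susp (Y : Type*) [TopologicalSpace Y] : Type _ :=
  Quot (fun a b : Y × (Set.Icc (-1 : ℝ) 1) =>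
    ((a.2 : ℝ) = 1 ∧ (b.2 : ℝ) = 1) ∨ ((a.2 : ℝ) = -1 ∧ (b.2 : ℝ) = -1))

end


/-! The vertices `0, …, n + 1` of `Δ^{n+1}` split into the `n / 2 + 1` edges `{2k, 2k+1}`, and
gluing face `2k` to face `2k+1` is the swap of the two coordinates of an edge on points where one
of them vanishes; so `M_π` is a join of circles, one for each edge. Concretely,
`x ↦ ((√x_{2k} + i √x_{2k+1})⁴)_k ∈ ℂ^{n/2+1}`, pushed radially to the unit sphere, is constant on
the gluing classes; it separates them, because the fourth power wraps each edge exactly once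
around the circle of radius `(x_{2k} + x_{2k+1})²` and `∑ x = 1` fixes the scale; and it is onto,
by taking fourth roots in the closed first quadrant. A continuous bijection from a compact space
onto a Hausdorff one is a homeomorphism. -/

open scoped NNReal

lemma Complex.exists_nonneg_re_im_pow_four_eq (w : ℂ) :
    ∃ u : ℂ, 0 ≤ u.re ∧ 0 ≤ u.im ∧ u ^ 4 = w := by
  obtain ⟨v, hv⟩ := IsAlgClosed.exists_pow_nat_eq w (by norm_num : 0 < 4)
  have hI (k : ℕ) : (I ^ k * v) ^ 4 = w := by
    rw [mul_pow, ← pow_mul, mul_comm k, pow_mul, I_pow_four, one_pow, one_mul, hv]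
  rcases le_or_gt 0 v.re with hre | hre <;> rcases le_or_gt 0 v.im with him | him
  · exact ⟨v, hre, him, hv⟩
  · exact ⟨I ^ 1 * v, by simp; linarith, by simpa using hre, hI 1⟩
  · exact ⟨I ^ 3 * v, by simpa using him, by simp; linarith, hI 3⟩
  · exact ⟨I ^ 2 * v, by simp; linarith, by simp; linarith, hI 2⟩

open Complex in
noncomputable def pairFold (a b : ℝ) : ℂ := (√a + √b * I) ^ 4

section PairFold

open Complex

lemma pairFold_re {a b : ℝ} (ha : 0 ≤ a) (hb : 0 ≤ b) :
    (pairFold a b).re = a ^ 2 - 6 * a * b + b ^ 2 := by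
  have hs := Real.sq_sqrt ha
  have ht := Real.sq_sqrt hb
  simp only [pairFold, pow_succ, pow_zero, one_mul, mul_re, mul_im, add_re, add_im, ofReal_re,
    ofReal_im, I_re, I_im]
  linear_combination (√a ^ 2 + a - 6 * √b ^ 2) * hs + (√b ^ 2 + b - 6 * a) * ht

lemma pairFold_im {a b : ℝ} (ha : 0 ≤ a) (hb : 0 ≤ b) :
    (pairFold a b).im = 4 * (√a * √b) * (a - b) := by
  have hs := Real.sq_sqrt ha
  have ht := Real.sq_sqrt hb
  simp only [pairFold, pow_succ, pow_zero, one_mul, mul_re, mul_im, add_re, add_im, ofReal_re,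
    ofReal_im, I_re, I_im]
  linear_combination 4 * √a * √b * (hs - ht)

lemma norm_pairFold {a b : ℝ} (ha : 0 ≤ a) (hb : 0 ≤ b) : ‖pairFold a b‖ = (a + b) ^ 2 := by
  have h : ‖(√a : ℂ) + √b * I‖ ^ 2 = a + b := by
    rw [← normSq_eq_norm_sq, normSq_add_mul_I, Real.sq_sqrt ha, Real.sq_sqrt hb]
  rw [pairFold, norm_pow, show 4 = 2 * 2 by rfl, pow_mul, h]

lemma pairFold_zero_left (a : ℝ) : pairFold 0 a = pairFold a 0 := by
  simp [pairFold, mul_pow]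

lemma pairFold_mul {c : ℝ} (hc : 0 ≤ c) (a b : ℝ) :
    pairFold (c * a) (c * b) = (c : ℂ) ^ 2 * pairFold a b := by
  have h : ((√c : ℝ) : ℂ) ^ 4 = (c : ℂ) ^ 2 := by
    rw [show 4 = 2 * 2 by rfl, pow_mul, ← ofReal_pow, Real.sq_sqrt hc]
  rw [pairFold, pairFold, Real.sqrt_mul hc, Real.sqrt_mul hc, ← h, ← mul_pow]
  push_cast
  ring

lemma pairFold_eq_pairFold {a b a' b' : ℝ} (ha : 0 ≤ a) (hb : 0 ≤ b) (ha' : 0 ≤ a')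
    (hb' : 0 ≤ b') (h : pairFold a b = pairFold a' b') :
    (a = a' ∧ b = b') ∨ (a = b' ∧ b = a' ∧ a * b = 0) := by
  have hsum : a + b = a' + b' := by
    have := congrArg norm h
    rwa [norm_pairFold ha hb, norm_pairFold ha' hb',
      pow_left_inj₀ (by positivity) (by positivity) two_ne_zero] at this
  have hre := congrArg re h
  rw [pairFold_re ha hb, pairFold_re ha' hb'] at hre
  have hprod : a * b = a' * b' := by nlinarith
  have hroots : (a - a') * (a - b') = 0 := by nlinarith
  rcases eq_or_ne a a' with haa' | haa'
  · exact Or.inl ⟨haa', by linarith⟩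
  have hab' : a = b' := by
    simpa [sub_eq_zero, haa'] using hroots
  have hba' : b = a' := by linarith
  refine Or.inr ⟨hab', hba', ?_⟩
  have him := congrArg im h
  rw [pairFold_im ha hb, pairFold_im ha' hb', ← hab', ← hba', mul_comm √b] at him
  have hsqrt : √a * √b * (a - b) = 0 := by linarith
  rw [← Real.sqrt_mul ha, mul_eq_zero, Real.sqrt_eq_zero (mul_nonneg ha hb)] at hsqrt
  exact hsqrt.resolve_right (sub_ne_zero.2 (hba' ▸ haa'))

lemma exists_pairFold_eq (w : ℂ) : ∃ a b : ℝ≥0, pairFold a b = w := by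
  obtain ⟨u, hre, him, hu⟩ := exists_nonneg_re_im_pow_four_eq w
  refine ⟨(u.re ^ 2).toNNReal, (u.im ^ 2).toNNReal, ?_⟩
  rw [pairFold, Real.coe_toNNReal _ (sq_nonneg _), Real.coe_toNNReal _ (sq_nonneg _),
    Real.sqrt_sq hre, Real.sqrt_sq him, re_add_im, hu]

@[fun_prop]
lemma Continuous.pairFold {X : Type*} [TopologicalSpace X] {f g : X → ℝ} (hf : Continuous f)
    (hg : Continuous g) : Continuous fun x => _root_.pairFold (f x) (g x) := by
  unfold _root_.pairFold
  fun_prop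

end PairFold

lemma Equiv.sum_pairs {ι κ M : Type*} [Fintype ι] [Fintype κ] [AddCommMonoid M]
    (e : κ × Fin 2 ≃ ι) (f : ι → M) : ∑ k, (f (e (k, 0)) + f (e (k, 1))) = ∑ i, f i := by
  rw [← e.sum_comp, Fintype.sum_prod_type]
  simp only [Fin.sum_univ_two]

abbrev NNSimplex (ι : Type*) [Fintype ι] : Type _ := ↥{x : ι → ℝ≥0 | ∑ i, x i = 1}

namespace NNSimplex

variable {ι κ : Type*} [Fintype ι]

lemma sum_eq_one (x : NNSimplex ι) : ∑ i, x.1 i = 1 := x.2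

instance : CompactSpace (NNSimplex ι) := by
  rw [← isCompact_iff_compactSpace]
  refine (isCompact_univ_pi fun _ => isCompact_Icc (a := (0 : ℝ≥0)) (b := 1)).of_isClosed_subset
    (isClosed_eq (continuous_finsetSum _ fun i _ => continuous_apply i) continuous_const)
    fun x hx i _ => ⟨zero_le, ?_⟩
  rw [← show ∑ i, x i = 1 from hx]
  exact Finset.single_le_sum (fun j _ => zero_le) (Finset.mem_univ i)

def permute (σ : Equiv.Perm ι) (x : NNSimplex ι) : NNSimplex ι :=
  ⟨x.1 ∘ σ, by
    show ∑ i, x.1 (σ i) = 1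
    rw [Equiv.sum_comp σ x.1, sum_eq_one]⟩

section PairRel

variable [DecidableEq ι] {e : κ × Fin 2 ≃ ι}

variable (e) in
def PairRel (x y : NNSimplex ι) : Prop :=
  ∃ k, x.1 (e (k, 0)) = 0 ∧ y = permute (Equiv.swap (e (k, 0)) (e (k, 1))) x

lemma permute_swap_permute_swap (x : NNSimplex ι) (p q : ι) :
    permute (Equiv.swap p q) (permute (Equiv.swap p q) x) = x :=
  Subtype.ext <| funext fun i => by simp [permute]

lemma permute_swap_apply_zero (x : NNSimplex ι) (k : κ) :
    (permute (Equiv.swap (e (k, 0)) (e (k, 1))) x).1 (e (k, 0)) = x.1 (e (k, 1)) := by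
  simp [permute]

lemma permute_swap_apply_one (x : NNSimplex ι) (k : κ) :
    (permute (Equiv.swap (e (k, 0)) (e (k, 1))) x).1 (e (k, 1)) = x.1 (e (k, 0)) := by
  simp [permute]

lemma permute_swap_apply_of_ne (x : NNSimplex ι) {k k' : κ} (hk : k' ≠ k) (b : Fin 2) :
    (permute (Equiv.swap (e (k, 0)) (e (k, 1))) x).1 (e (k', b)) = x.1 (e (k', b)) := by
  simp [permute, Equiv.swap_apply_of_ne_of_ne, hk]

lemma mk_eq_mk_permute_swap {x : NNSimplex ι} {k : κ}
    (hx : x.1 (e (k, 0)) * x.1 (e (k, 1)) = 0) :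
    Quot.mk (PairRel e) x = Quot.mk _ (permute (Equiv.swap (e (k, 0)) (e (k, 1))) x) := by
  rcases mul_eq_zero.1 hx with h | h
  · exact Quot.sound ⟨k, h, rfl⟩
  · refine (Quot.sound ⟨k, ?_, (permute_swap_permute_swap x _ _).symm⟩).symm
    rwa [permute_swap_apply_zero]

lemma mk_eq_mk_of_swapped_on (S : Finset κ) (x y : NNSimplex ι)
    (hout : ∀ k ∉ S, ∀ b, x.1 (e (k, b)) = y.1 (e (k, b)))
    (hin : ∀ k ∈ S, x.1 (e (k, 0)) = y.1 (e (k, 1)) ∧ x.1 (e (k, 1)) = y.1 (e (k, 0)) ∧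
      x.1 (e (k, 0)) * x.1 (e (k, 1)) = 0) :
    Quot.mk (PairRel e) x = Quot.mk _ y := by
  classical
  induction S using Finset.induction_on generalizing x with
  | empty =>
    congr
    exact Subtype.ext <| funext fun i => by simpa using hout (e.symm i).1 (by simp) (e.symm i).2
  | insert k S hk ih =>
    obtain ⟨h0, h1, hzero⟩ := hin k (Finset.mem_insert_self k S)
    rw [mk_eq_mk_permute_swap hzero]
    refine ih _ (fun k' hk' b => ?_) (fun k' hk' => ?_)
    · rcases eq_or_ne k' k with rfl | hne
      · fin_cases b
        · simpa [permute_swap_apply_zero] using h1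
        · simpa [permute_swap_apply_one] using h0
      · rw [permute_swap_apply_of_ne x hne]
        exact hout k' (by simp [hne, hk']) b
    · have hne : k' ≠ k := fun h => hk (h ▸ hk')
      simp only [permute_swap_apply_of_ne x hne]
      exact hin k' (Finset.mem_insert_of_mem hk')

end PairRel

variable {e : κ × Fin 2 ≃ ι}

variable (e) in
noncomputable def foldVec (x : NNSimplex ι) : EuclideanSpace ℂ κ :=
  WithLp.toLp 2 fun k => pairFold (x.1 (e (k, 0))) (x.1 (e (k, 1)))

lemma norm_foldVec_apply (x : NNSimplex ι) (k : κ) :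
    ‖foldVec e x k‖ = ((x.1 (e (k, 0)) + x.1 (e (k, 1)) : ℝ≥0) : ℝ) ^ 2 := by
  simp [foldVec, norm_pairFold]

lemma foldVec_eq_of_pairRel [DecidableEq ι] {x y : NNSimplex ι} (h : PairRel e x y) :
    foldVec e x = foldVec e y := by
  obtain ⟨k, hx, rfl⟩ := h
  ext k'
  rcases eq_or_ne k' k with rfl | hk
  · simp only [foldVec, PiLp.toLp_apply, permute_swap_apply_zero, permute_swap_apply_one, hx,
      NNReal.coe_zero, pairFold_zero_left]
  · simp only [foldVec, PiLp.toLp_apply, permute_swap_apply_of_ne x hk]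

lemma continuous_foldVec : Continuous (foldVec (ι := ι) e) := by
  -- `fun_prop` does not see through the coercion `ℝ≥0 → ℝ`; it uses `hcoord` instead.
  have hcoord (i : ι) : Continuous fun x : NNSimplex ι => (x.1 i : ℝ) :=
    NNReal.continuous_coe.comp ((continuous_apply i).comp continuous_subtype_val)
  unfold foldVec
  fun_prop

variable [Fintype κ]

lemma sum_pairs_eq_one (x : NNSimplex ι) :
    ∑ k, ((x.1 (e (k, 0)) + x.1 (e (k, 1)) : ℝ≥0) : ℝ) = 1 := by
  rw [← NNReal.coe_sum, e.sum_pairs, sum_eq_one, NNReal.coe_one]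

lemma foldVec_ne_zero (x : NNSimplex ι) : foldVec e x ≠ 0 := by
  intro h
  have hpair (k : κ) : ((x.1 (e (k, 0)) + x.1 (e (k, 1)) : ℝ≥0) : ℝ) = 0 := by
    have := norm_foldVec_apply (e := e) x k
    rwa [h, PiLp.zero_apply, norm_zero, eq_comm, sq_eq_zero_iff] at this
  simpa [hpair] using sum_pairs_eq_one (e := e) x

lemma eq_one_of_foldVec_eq_smul {x y : NNSimplex ι} {c : ℝ} (hc : 0 ≤ c)
    (h : foldVec e x = c • foldVec e y) : c = 1 := by
  have hpair (k : κ) : ((x.1 (e (k, 0)) + x.1 (e (k, 1)) : ℝ≥0) : ℝ) =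
      √c * ((y.1 (e (k, 0)) + y.1 (e (k, 1)) : ℝ≥0) : ℝ) := by
    have := congrArg (fun v => ‖v k‖) h
    simp only [PiLp.smul_apply, norm_smul, Real.norm_of_nonneg hc, norm_foldVec_apply] at this
    rw [← Real.sqrt_sq (NNReal.coe_nonneg _), this, Real.sqrt_mul hc,
      Real.sqrt_sq (NNReal.coe_nonneg _)]
  have := sum_pairs_eq_one (e := e) x
  rwa [Finset.sum_congr rfl fun k _ => hpair k, ← Finset.mul_sum, sum_pairs_eq_one, mul_one,
    Real.sqrt_eq_one] at this

lemma exists_foldVec_eq_smul {z : EuclideanSpace ℂ κ} (hz : z ≠ 0) :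
    ∃ (x : NNSimplex ι) (c : ℝ), 0 < c ∧ foldVec e x = c • z := by
  choose a b hab using fun k => exists_pairFold_eq (z k)
  set f : κ × Fin 2 → ℝ≥0 := fun p => ![a p.1, b p.1] p.2
  set T := ∑ k, (a k + b k)
  have hT : T ≠ 0 := by
    intro hT
    have hab0 (k : κ) : a k = 0 ∧ b k = 0 :=
      add_eq_zero.1 ((Finset.sum_eq_zero_iff.1 hT) k (Finset.mem_univ k))
    refine hz (PiLp.ext fun k => ?_)
    rw [← hab, (hab0 k).1, (hab0 k).2, NNReal.coe_zero, PiLp.zero_apply, pairFold_zero_left,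
      pairFold, Real.sqrt_zero]
    simp
  refine ⟨⟨fun i => T⁻¹ * f (e.symm i), ?_⟩, (T : ℝ)⁻¹ ^ 2, by positivity, PiLp.ext fun k => ?_⟩
  · show ∑ i, T⁻¹ * f (e.symm i) = 1
    rw [← Finset.mul_sum, e.symm.sum_comp f, ← (Equiv.refl _).sum_pairs f]
    exact inv_mul_cancel₀ hT
  · simp only [foldVec, PiLp.toLp_apply, PiLp.smul_apply, Equiv.symm_apply_apply, NNReal.coe_mul,
      NNReal.coe_inv, f, Matrix.cons_val_zero, Matrix.cons_val_one, Matrix.cons_val_fin_one]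
    rw [pairFold_mul (by positivity), hab, Complex.real_smul]
    push_cast
    ring

variable (e) in
noncomputable def toSphere (x : NNSimplex ι) : Metric.sphere (0 : EuclideanSpace ℂ κ) 1 :=
  ⟨‖foldVec e x‖⁻¹ • foldVec e x, by
    rw [mem_sphere_zero_iff_norm]
    exact norm_smul_inv_norm (𝕜 := ℝ) (foldVec_ne_zero x)⟩

lemma continuous_toSphere : Continuous (toSphere (ι := ι) e) :=
  ((continuous_norm.comp continuous_foldVec).inv₀ fun x => norm_ne_zero_iff.2
    (foldVec_ne_zero x)).smul continuous_foldVec |>.subtype_mk _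

variable [DecidableEq ι]

lemma mk_eq_mk_of_foldVec_eq {x y : NNSimplex ι} (h : foldVec e x = foldVec e y) :
    Quot.mk (PairRel e) x = Quot.mk _ y := by
  classical
  have hpair (k : κ) := pairFold_eq_pairFold (NNReal.coe_nonneg (x.1 (e (k, 0))))
    (NNReal.coe_nonneg (x.1 (e (k, 1)))) (NNReal.coe_nonneg (y.1 (e (k, 0))))
    (NNReal.coe_nonneg (y.1 (e (k, 1)))) (congrArg (· k) h)
  refine mk_eq_mk_of_swapped_on (Finset.univ.filter fun k =>
      ¬ (x.1 (e (k, 0)) = y.1 (e (k, 0)) ∧ x.1 (e (k, 1)) = y.1 (e (k, 1))))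
    x y (fun k hk b => ?_) (fun k hk => ?_)
  · simp only [Finset.mem_filter, Finset.mem_univ, true_and, not_not] at hk
    fin_cases b
    exacts [hk.1, hk.2]
  · simp only [Finset.mem_filter, Finset.mem_univ, true_and] at hk
    exact_mod_cast (hpair k).resolve_left (by exact_mod_cast hk)

variable (e) in
noncomputable def foldMap : Quot (PairRel e) → Metric.sphere (0 : EuclideanSpace ℂ κ) 1 :=
  Quot.lift (toSphere e) fun _ _ h => by simp only [toSphere, foldVec_eq_of_pairRel h]

lemma foldMap_bijective : Function.Bijective (foldMap e) := by
  constructor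
  · rintro ⟨x⟩ ⟨y⟩ h
    apply mk_eq_mk_of_foldVec_eq
    have hsmul : foldVec e x = (‖foldVec e x‖ * ‖foldVec e y‖⁻¹) • foldVec e y := by
      have := congrArg (fun v => ‖foldVec e x‖ • v.1) h
      simp only [foldMap, toSphere, smul_smul] at this
      rwa [mul_inv_cancel₀ (norm_ne_zero_iff.2 (foldVec_ne_zero x)), one_smul] at this
    rwa [eq_one_of_foldVec_eq_smul (by positivity) hsmul, one_smul] at hsmul
  · rintro ⟨z, hz⟩
    rw [mem_sphere_zero_iff_norm] at hz
    obtain ⟨x, c, hc, hx⟩ :=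
      exists_foldVec_eq_smul (ι := ι) (e := e) (norm_ne_zero_iff.1 (hz ▸ one_ne_zero))
    refine ⟨Quot.mk _ x, Subtype.ext ?_⟩
    simp only [foldMap, toSphere, hx, norm_smul, Real.norm_of_nonneg hc.le, hz, mul_one,
      smul_smul, inv_mul_cancel₀ hc.ne', one_smul]

variable (e) in
noncomputable def foldHomeomorph :
    Quot (PairRel e) ≃ₜ Metric.sphere (0 : EuclideanSpace ℂ κ) 1 :=
  Continuous.homeoOfEquivCompactToT2 (f := Equiv.ofBijective _ foldMap_bijective)
    (continuous_quot_lift _ continuous_toSphere)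

end NNSimplex

noncomputable def EuclideanSpace.complexEquivReal {ι κ : Type*} [Fintype ι] [Fintype κ]
    (e : κ × Fin 2 ≃ ι) : EuclideanSpace ℂ κ ≃ₗᵢ[ℝ] EuclideanSpace ℝ ι :=
  (Pi.orthonormalBasis fun _ : κ => Complex.orthonormalBasisOneI).repr.trans
    (LinearIsometryEquiv.piLpCongrLeft 2 ℝ ℝ ((Equiv.sigmaEquivProd κ (Fin 2)).trans e))

noncomputable def LinearIsometryEquiv.unitSphereHomeomorph {E F : Type*} [NormedAddCommGroup E]
    [NormedAddCommGroup F] [NormedSpace ℝ E] [NormedSpace ℝ F] (L : E ≃ₗᵢ[ℝ] F) :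
    Metric.sphere (0 : E) 1 ≃ₜ Metric.sphere (0 : F) 1 :=
  L.toHomeomorph.subtype fun x => by simp

lemma Fin.swap_castSucc_succ_succAbove {n : ℕ} (j m : Fin (n + 1)) :
    Equiv.swap j.castSucc j.succ (j.succ.succAbove m) = j.castSucc.succAbove m := by
  rcases lt_trichotomy m j with h | rfl | h
  · rw [Fin.succAbove_succ_of_le _ _ h.le, Fin.succAbove_castSucc_of_lt _ _ h]
    exact Equiv.swap_apply_of_ne_of_ne (by simpa using h.ne)
      (Fin.ne_of_val_ne (by rw [Fin.val_castSucc, Fin.val_succ]; omega))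
  · rw [Fin.succAbove_succ_self, Fin.succAbove_castSucc_self, Equiv.swap_apply_left]
  · rw [Fin.succAbove_succ_of_lt _ _ h, Fin.succAbove_castSucc_of_le _ _ h.le]
    exact Equiv.swap_apply_of_ne_of_ne
      (Fin.ne_of_val_ne (by rw [Fin.val_castSucc, Fin.val_succ]; omega)) (by simpa using h.ne')

section Faces

variable {n : ℕ}

lemma faceIncl_apply (j : Fin (n + 2)) (t : TopSimplex n) (i : Fin (n + 2)) :
    (faceIncl n j t).1 i = ∑ m ∈ Finset.univ.filter (fun m => j.succAbove m = i), t.1 m :=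
  rfl

lemma faceIncl_apply_self (j : Fin (n + 2)) (t : TopSimplex n) : (faceIncl n j t).1 j = 0 := by
  rw [faceIncl_apply]
  exact Finset.sum_eq_zero fun m hm => absurd (Finset.mem_filter.1 hm).2 (Fin.succAbove_ne j m)

lemma faceIncl_apply_succAbove (j : Fin (n + 2)) (t : TopSimplex n) (m : Fin (n + 1)) :
    (faceIncl n j t).1 (j.succAbove m) = t.1 m := by
  rw [faceIncl_apply]
  refine Finset.sum_eq_single_of_mem m (by simp) fun m' hm' hne => ?_
  exact absurd (Fin.succAbove_right_injective (Finset.mem_filter.1 hm').2) hne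

lemma eq_faceIncl {j : Fin (n + 2)} {t : TopSimplex n} {x : TopSimplex (n + 1)} (hj : x.1 j = 0)
    (h : ∀ m, x.1 (j.succAbove m) = t.1 m) : x = faceIncl n j t := by
  refine Subtype.ext <| funext fun i => ?_
  rcases eq_or_ne i j with rfl | hij
  · rw [hj, faceIncl_apply_self]
  · obtain ⟨m, rfl⟩ := Fin.exists_succAbove_eq hij
    rw [h, faceIncl_apply_succAbove]

lemma exists_eq_faceIncl {j : Fin (n + 2)} {x : TopSimplex (n + 1)} (hj : x.1 j = 0) :
    ∃ t : TopSimplex n, x = faceIncl n j t := by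
  refine ⟨⟨fun m => x.1 (j.succAbove m), ?_⟩, eq_faceIncl hj fun m => rfl⟩
  show ∑ m, x.1 (j.succAbove m) = 1
  have := Fin.sum_univ_succAbove x.1 j
  rwa [show ∑ i, x.1 i = 1 from x.2, hj, zero_add, eq_comm] at this

lemma faceIncl_eq_permute_swap {j j' : Fin (n + 2)} (hj : (j' : ℕ) = j + 1) (t : TopSimplex n) :
    faceIncl n j' t = NNSimplex.permute (Equiv.swap j j') (faceIncl n j t) := by
  obtain ⟨j₀, rfl, rfl⟩ : ∃ j₀ : Fin (n + 1), j = j₀.castSucc ∧ j' = j₀.succ :=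
    ⟨⟨j, by omega⟩, rfl, Fin.ext (by simp [hj])⟩
  refine (eq_faceIncl ?_ fun m => ?_).symm
  · exact (congrArg (faceIncl n _ t).1 (Equiv.swap_apply_right _ _)).trans
      (faceIncl_apply_self _ t)
  · show (faceIncl n _ t).1 (Equiv.swap _ _ _) = _
    rw [Fin.swap_castSucc_succ_succAbove, faceIncl_apply_succAbove]

end Faces

lemma matchRel_eq_pairRel {n m : ℕ} {π : Fin (n + 2) → Fin (n + 2)}
    (hπ : ∀ j : Fin (n + 2), Even (j : ℕ) → (π j : ℕ) = (j : ℕ) + 1)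
    {e : Fin m × Fin 2 ≃ Fin (n + 2)} (he : ∀ p, (e p : ℕ) = 2 * p.1 + p.2) :
    matchRel n π = NNSimplex.PairRel e := by
  have hev (k : Fin m) : Even (e (k, 0) : ℕ) := by simp [he]
  have hπe (k : Fin m) : π (e (k, 0)) = e (k, 1) := Fin.ext (by simp [hπ _ (hev k), he])
  have hface (k : Fin m) (t : TopSimplex n) : faceIncl n (e (k, 1)) t =
      NNSimplex.permute (Equiv.swap (e (k, 0)) (e (k, 1))) (faceIncl n (e (k, 0)) t) :=
    faceIncl_eq_permute_swap (by simp [he]) t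
  ext x y
  constructor
  · rintro ⟨j, hj, t, rfl, rfl⟩
    obtain ⟨⟨k, b⟩, rfl⟩ := e.surjective j
    obtain rfl : b = 0 := by
      rw [he, Nat.even_iff] at hj
      exact Fin.ext (by simp only at hj; simp; omega)
    exact ⟨k, faceIncl_apply_self _ t, by rw [hπe, hface]⟩
  · rintro ⟨k, hx, rfl⟩
    obtain ⟨t, rfl⟩ := exists_eq_faceIncl hx
    exact ⟨e (k, 0), hev k, t, rfl, by rw [hπe, hface]⟩

theorem stmt6 (n : ℕ) (hn : Odd (n + 1)) (π : Fin (n + 2) → Fin (n + 2))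
    (hπ : ∀ j : Fin (n + 2), Even (j : ℕ) → (π j : ℕ) = (j : ℕ) + 1) :
    Nonempty (ModelSpace n π ≃ₜ Metric.sphere (0 : EuclideanSpace ℝ (Fin (n + 2))) 1) := by
  obtain ⟨m, hm⟩ : ∃ m, m * 2 = n + 2 := by
    obtain ⟨k, hk⟩ := hn
    exact ⟨k + 1, by omega⟩
  set e : Fin m × Fin 2 ≃ Fin (n + 2) := finProdFinEquiv.trans (finCongr hm)
  have he : ∀ p, (e p : ℕ) = 2 * p.1 + p.2 := fun p => by
    simp [e, finProdFinEquiv, add_comm]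
  unfold ModelSpace
  rw [matchRel_eq_pairRel hπ he]
  exact ⟨(NNSimplex.foldHomeomorph e).trans
    (EuclideanSpace.complexEquivReal e).unitSphereHomeomorph⟩
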